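/- Let m and e be integers with e ≥ 0, and let t ∈ ℂ with |t| < 1. Then Σ_{n=0}^{∞} I_Δ(m-n, e) · (t·u^{-e})^n / (q;q)_n converges absolutely and equals u^{-m·e} · ((q^{e+1};q)_∞ / ((q;q)_∞ · (t;q)_∞)) · Σ_{k=0}^{∞} ((t;q)_k / ((q^{e+1};q)_k · (q;q)_k)) · (-1)^k · q^{k(k-1)/2 + (1-m)k}, i.e., equals q^{-me/2}·((q^{e+1};q)_∞/((q;q)_∞(t;q)_∞)) times the basic hypergeometric series ₁φ₁(t; q^{e+1}; q, q^{1-m}). -/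

import Mathlib

open scoped BigOperators

/-- Finite q-Pochhammer symbol `(a;q)_n = ∏_{i=0}^{n-1} (1 - a q^i)`. -/
noncomputable def qPoch (a q : ℂ) (n : ℕ) : ℂ :=
  ∏ i ∈ Finset.range n, (1 - a * q ^ i)

/-- Infinite q-Pochhammer symbol `(a;q)_∞ = ∏_{i=0}^{∞} (1 - a q^i)`. -/
noncomputable def qPochInf (a q : ℂ) : ℂ :=
  ∏' i : ℕ, (1 - a * q ^ i)

/-- The `n`-th term of the series defining the tetrahedral index `I_Δ(m,e)`,
with `q = u^2` and vanishing below `e₊ = max(-e,0)`. -/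
noncomputable def tetTerm (u : ℂ) (m e : ℤ) (n : ℕ) : ℂ :=
  if (-e).toNat ≤ n then
    (-1 : ℂ) ^ n * u ^ ((n : ℤ) * ((n : ℤ) + 1) - (2 * (n : ℤ) + e) * m) /
      (qPoch (u ^ 2) (u ^ 2) n * qPoch (u ^ 2) (u ^ 2) ((n : ℤ) + e).toNat)
  else 0

/-- The tetrahedral index `I_Δ(m,e) = Σ_{n=e₊}^∞ (-1)^n u^{n(n+1)-(2n+e)m}/((q;q)_n (q;q)_{n+e})`. -/
noncomputable def tetIndex (u : ℂ) (m e : ℤ) : ℂ := ∑' n : ℕ, tetTerm u m e n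

/-!
Writing `q = u²` and `I_j` for the `j`-th term of `I_Δ(m,e)`, one has
`u^{-(2j+e)(m-n)} u^{-en} = u^{-(2j+e)m} q^{jn}`, so the `n`-th term of the series is
`∑_j I_j (t q^j)^n / (q;q)_n`. The `I_j` decay like `|u|^{j²}`, so this double series converges
absolutely and may be summed over `n` first; Euler's identity `∑_n z^n/(q;q)_n = 1/(z;q)_∞`
(from `(1 - z) e_q(z) = e_q(qz)`, iterated, and continuity of `e_q` at `0`) turns the inner sum
into `(t;q)_j / (t;q)_∞`. For `e ≥ 0`, `(q;q)_{j+e} = (q;q)_e (q^{e+1};q)_j` and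
`(q;q)_e = (q;q)_∞ / (q^{e+1};q)_∞` put the result in `₁φ₁` form.
-/

open Filter Topology

section QPochhammer

variable {a q : ℂ}

lemma qPoch_succ (a q : ℂ) (n : ℕ) : qPoch a q (n + 1) = qPoch a q n * (1 - a * q ^ n) :=
  Finset.prod_range_succ _ _

lemma qPoch_add (a q : ℂ) (k j : ℕ) : qPoch a q (k + j) = qPoch a q k * qPoch (a * q ^ k) q j := by
  simp only [qPoch, Finset.prod_range_add, pow_add, mul_assoc]

lemma norm_mul_pow_le (a : ℂ) (hq : ‖q‖ ≤ 1) (i : ℕ) : ‖a * q ^ i‖ ≤ ‖a‖ := by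
  rw [norm_mul, norm_pow]
  exact mul_le_of_le_one_right (norm_nonneg a) (pow_le_one₀ (norm_nonneg q) hq)

lemma one_sub_mul_pow_ne_zero (ha : ‖a‖ < 1) (hq : ‖q‖ ≤ 1) (i : ℕ) : 1 - a * q ^ i ≠ 0 := by
  intro h
  have := (norm_mul_pow_le a hq i).trans_lt ha
  rw [← sub_eq_zero.mp h, norm_one] at this
  exact this.false

lemma qPoch_ne_zero (ha : ‖a‖ < 1) (hq : ‖q‖ ≤ 1) (n : ℕ) : qPoch a q n ≠ 0 :=
  Finset.prod_ne_zero_iff.2 fun i _ => one_sub_mul_pow_ne_zero ha hq i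

lemma summable_norm_neg_mul_pow (a : ℂ) (hq : ‖q‖ < 1) :
    Summable fun i : ℕ => ‖-(a * q ^ i)‖ := by
  simpa [norm_mul, norm_pow] using
    (summable_geometric_of_lt_one (norm_nonneg q) hq).mul_left ‖a‖

lemma multipliable_one_sub_mul_pow (a : ℂ) (hq : ‖q‖ < 1) :
    Multipliable fun i : ℕ => 1 - a * q ^ i := by
  simpa [sub_eq_add_neg] using multipliable_one_add_of_summable (summable_norm_neg_mul_pow a hq)

lemma qPochInf_ne_zero (ha : ‖a‖ < 1) (hq : ‖q‖ < 1) : qPochInf a q ≠ 0 := by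
  simpa [qPochInf, sub_eq_add_neg] using tprod_one_add_ne_zero_of_summable
    (by simpa [sub_eq_add_neg] using one_sub_mul_pow_ne_zero ha hq.le)
    (summable_norm_neg_mul_pow a hq)

lemma tendsto_qPoch (a : ℂ) (hq : ‖q‖ < 1) :
    Tendsto (qPoch a q) atTop (𝓝 (qPochInf a q)) :=
  (multipliable_one_sub_mul_pow a hq).hasProd.tendsto_prod_nat

lemma qPochInf_eq_qPoch_mul (a : ℂ) (hq : ‖q‖ < 1) (k : ℕ) :
    qPochInf a q = qPoch a q k * qPochInf (a * q ^ k) q := by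
  have hshift : Multipliable fun i : ℕ => 1 - a * q ^ (i + k) :=
    (multipliable_one_sub_mul_pow (a * q ^ k) hq).congr fun i => by ring
  rw [qPochInf, ← Multipliable.prod_mul_tprod_nat_mul' (f := fun i => 1 - a * q ^ i) hshift]
  congr 1
  exact tprod_congr fun i => by ring

lemma exists_norm_inv_qPoch_le (ha : ‖a‖ < 1) (hq : ‖q‖ < 1) :
    ∃ C, ∀ n, ‖(qPoch a q n)⁻¹‖ ≤ C := by
  obtain ⟨C, hC⟩ := ((tendsto_qPoch a hq).inv₀ (qPochInf_ne_zero ha hq)).norm.bddAbove_range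
  exact ⟨C, fun n => hC ⟨n, rfl⟩⟩

end QPochhammer

noncomputable def qExp (q z : ℂ) : ℂ := ∑' n : ℕ, z ^ n / qPoch q q n

section QExp

variable {q z : ℂ}

lemma qExp_zero (q : ℂ) : qExp q 0 = 1 := by
  rw [qExp, tsum_eq_single 0 fun n hn => by simp [zero_pow hn]]
  simp [qPoch]

lemma summable_norm_pow_div_qPoch (hq : ‖q‖ < 1) (hz : ‖z‖ < 1) :
    Summable fun n : ℕ => ‖z ^ n / qPoch q q n‖ := by
  obtain ⟨C, hC⟩ := exists_norm_inv_qPoch_le hq hq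
  refine .of_nonneg_of_le (fun n => norm_nonneg _) (fun n => ?_)
    ((summable_geometric_of_lt_one (norm_nonneg z) hz).mul_right C)
  rw [div_eq_mul_inv, norm_mul, norm_pow]
  exact mul_le_mul_of_nonneg_left (hC n) (by positivity)

lemma one_sub_mul_qExp (hq : ‖q‖ < 1) (hz : ‖z‖ < 1) :
    (1 - z) * qExp q z = qExp q (z * q) := by
  have hS := (summable_norm_pow_div_qPoch hq hz).of_norm
  have hzq : ‖z * q‖ < 1 := by simpa using (norm_mul_pow_le z hq.le 1).trans_lt hz
  have hS' := (summable_norm_pow_div_qPoch hq hzq).of_norm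
  have hdiff : qExp q z - qExp q (z * q) = z * qExp q z := by
    rw [qExp, qExp, ← hS.tsum_sub hS', (hS.sub hS').tsum_eq_zero_add, ← tsum_mul_left]
    simp only [pow_zero, sub_self, zero_add]
    refine tsum_congr fun n => ?_
    have := qPoch_ne_zero hq hq.le n
    have := one_sub_mul_pow_ne_zero hq hq.le n
    rw [qPoch_succ]
    field_simp
    ring
  linear_combination hdiff

lemma qPoch_mul_qExp (hq : ‖q‖ < 1) (hz : ‖z‖ < 1) (N : ℕ) :
    qPoch z q N * qExp q z = qExp q (z * q ^ N) := by
  induction N with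
  | zero => simp [qPoch]
  | succ N ih =>
    calc qPoch z q (N + 1) * qExp q z = (1 - z * q ^ N) * (qPoch z q N * qExp q z) := by
          rw [qPoch_succ]; ring
      _ = qExp q (z * q ^ N * q) := by
          rw [ih, one_sub_mul_qExp hq ((norm_mul_pow_le z hq.le N).trans_lt hz)]
      _ = qExp q (z * q ^ (N + 1)) := by rw [pow_succ, mul_assoc]

lemma continuousOn_qExp (hq : ‖q‖ < 1) {r : ℝ} (hr0 : 0 ≤ r) (hr : r < 1) :
    ContinuousOn (qExp q) (Metric.closedBall 0 r) := by
  obtain ⟨C, hC⟩ := exists_norm_inv_qPoch_le hq hq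
  refine continuousOn_tsum (fun n => by fun_prop) (u := fun n => r ^ n * C)
    ((summable_geometric_of_lt_one hr0 hr).mul_right C) fun n w hw => ?_
  rw [mem_closedBall_zero_iff] at hw
  rw [div_eq_mul_inv, norm_mul, norm_pow]
  exact mul_le_mul (pow_le_pow_left₀ (norm_nonneg w) hw n) (hC n) (norm_nonneg _)
    (pow_nonneg hr0 n)

theorem qPochInf_mul_qExp (hq : ‖q‖ < 1) (hz : ‖z‖ < 1) : qPochInf z q * qExp q z = 1 := by
  have hshrink : Tendsto (fun N : ℕ => z * q ^ N) atTop (𝓝[Metric.closedBall 0 ‖z‖] 0) := by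
    refine tendsto_nhdsWithin_iff.2 ⟨?_, Eventually.of_forall fun N => ?_⟩
    · simpa using (tendsto_pow_atTop_nhds_zero_of_norm_lt_one hq).const_mul z
    · simpa using norm_mul_pow_le z hq.le N
  have hlim : Tendsto (fun N : ℕ => qExp q (z * q ^ N)) atTop (𝓝 1) := by
    simpa [qExp_zero, Function.comp_def] using
      ((continuousOn_qExp hq (norm_nonneg z) hz) 0 (by simp)).tendsto.comp hshrink
  have hlim' : Tendsto (fun N : ℕ => qExp q (z * q ^ N)) atTop
      (𝓝 (qPochInf z q * qExp q z)) := by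
    simpa only [qPoch_mul_qExp hq hz] using (tendsto_qPoch z hq).mul_const (qExp q z)
  exact tendsto_nhds_unique hlim' hlim

lemma qPochInf_mul_qExp_mul_pow (hq : ‖q‖ < 1) (hz : ‖z‖ < 1) (j : ℕ) :
    qPochInf z q * qExp q (z * q ^ j) = qPoch z q j := by
  rw [qPochInf_eq_qPoch_mul z hq j, mul_assoc,
    qPochInf_mul_qExp hq ((norm_mul_pow_le z hq.le j).trans_lt hz), mul_one]

end QExp

lemma summable_zpow_quadratic {ρ : ℝ} (h0 : 0 < ρ) (h1 : ρ < 1) (b c : ℤ) :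
    Summable fun j : ℕ => ρ ^ ((j : ℤ) * j + b * j + c) := by
  have hb : 0 ≤ (|b| - b + 2) * (|b| + b) :=
    mul_nonneg (by linarith [le_abs_self b]) (by linarith [neg_abs_le b])
  obtain ⟨D, hle⟩ : ∃ D : ℤ, ∀ j : ℕ, (j : ℤ) - D ≤ (j : ℤ) * j + b * j + c :=
    ⟨(|b| + 1) ^ 2 - c, fun j => by nlinarith [sq_nonneg (2 * (j : ℤ) + b - 1)]⟩
  refine .of_nonneg_of_le (fun j => (zpow_pos h0 _).le) (fun j => ?_)
    ((summable_geometric_of_lt_one h0.le h1).mul_right (ρ ^ (-D)))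
  calc ρ ^ ((j : ℤ) * j + b * j + c) ≤ ρ ^ ((j : ℤ) - D) :=
        zpow_le_zpow_right_of_le_one₀ h0 h1.le (hle j)
    _ = ρ ^ j * ρ ^ (-D) := by rw [sub_eq_add_neg, zpow_add₀ h0.ne', zpow_natCast]

section Tetrahedral

variable {u t : ℂ}

lemma norm_sq_lt_one (hu : ‖u‖ < 1) : ‖u ^ 2‖ < 1 := by
  rw [norm_pow]
  exact pow_lt_one₀ (norm_nonneg u) hu two_ne_zero

lemma summable_norm_tetTerm (hu0 : 0 < ‖u‖) (hu1 : ‖u‖ < 1) (m e : ℤ) :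
    Summable fun j : ℕ => ‖tetTerm u m e j‖ := by
  have hq := norm_sq_lt_one hu1
  obtain ⟨C, hC⟩ := exists_norm_inv_qPoch_le hq hq
  have hC0 : 0 ≤ C := (norm_nonneg _).trans (hC 0)
  refine .of_nonneg_of_le (fun j => norm_nonneg _) (fun j => ?_)
    ((summable_zpow_quadratic hu0 hu1 (1 - 2 * m) (-(e * m))).mul_right (C * C))
  rw [tetTerm]
  split_ifs
  · rw [div_eq_mul_inv, mul_inv, norm_mul, norm_mul, norm_mul, norm_pow, norm_neg, norm_one,
      one_pow, one_mul, norm_zpow]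
    refine mul_le_mul (le_of_eq (by ring_nf)) (mul_le_mul (hC _) (hC _) (norm_nonneg _) hC0)
      (by positivity) (by positivity)
  · simpa using mul_nonneg (zpow_pos hu0 _).le (mul_nonneg hC0 hC0)

lemma tetTerm_sub_mul_pow (hu : u ≠ 0) (m e : ℤ) (n j : ℕ) :
    tetTerm u (m - n) e j * (t * u ^ (-e)) ^ n = tetTerm u m e j * (t * (u ^ 2) ^ j) ^ n := by
  unfold tetTerm
  split_ifs
  · have hshift : u ^ ((j : ℤ) * (j + 1) - (2 * j + e) * (m - n)) * u ^ (-e * n) =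
        u ^ ((j : ℤ) * (j + 1) - (2 * j + e) * m) * u ^ (2 * j * n : ℤ) := by
      rw [← zpow_add₀ hu, ← zpow_add₀ hu]
      ring_nf
    have h1 : (u ^ (-e)) ^ n = u ^ (-e * n) := by rw [← zpow_natCast, ← zpow_mul]
    have h2 : ((u ^ 2) ^ j) ^ n = u ^ (2 * j * n : ℤ) := by
      rw [← pow_mul, ← pow_mul, ← zpow_natCast]
      push_cast
      ring_nf
    rw [mul_pow, mul_pow, h1, h2]
    linear_combination ((-1) ^ j * t ^ n /
      (qPoch (u ^ 2) (u ^ 2) j * qPoch (u ^ 2) (u ^ 2) ((j : ℤ) + e).toNat)) * hshift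
  · simp

lemma tetIndex_sub_mul_pow_div_eq_tsum (hu : u ≠ 0) (m e : ℤ) (n : ℕ) :
    tetIndex u (m - n) e * (t * u ^ (-e)) ^ n / qPoch (u ^ 2) (u ^ 2) n =
      ∑' j : ℕ, tetTerm u m e j * (t * (u ^ 2) ^ j) ^ n / qPoch (u ^ 2) (u ^ 2) n := by
  rw [tetIndex, ← tsum_mul_right, ← tsum_div_const]
  simp only [tetTerm_sub_mul_pow hu]

lemma summable_norm_tetTerm_mul_pow_div (hu0 : 0 < ‖u‖) (hu1 : ‖u‖ < 1) (ht : ‖t‖ < 1)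
    (m e : ℤ) :
    Summable fun p : ℕ × ℕ =>
      ‖tetTerm u m e p.2 * (t * (u ^ 2) ^ p.2) ^ p.1 / qPoch (u ^ 2) (u ^ 2) p.1‖ := by
  have hq := norm_sq_lt_one hu1
  obtain ⟨C, hC⟩ := exists_norm_inv_qPoch_le hq hq
  refine .of_nonneg_of_le (fun p => norm_nonneg _) (fun ⟨n, j⟩ => ?_)
    (Summable.mul_of_nonneg ((summable_geometric_of_lt_one (norm_nonneg t) ht).mul_right C)
      (summable_norm_tetTerm hu0 hu1 m e) (fun n => ?_) (fun j => norm_nonneg _))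
  · rw [div_eq_mul_inv, norm_mul, norm_mul, norm_pow]
    calc ‖tetTerm u m e j‖ * ‖t * (u ^ 2) ^ j‖ ^ n * ‖(qPoch (u ^ 2) (u ^ 2) n)⁻¹‖
        ≤ ‖tetTerm u m e j‖ * ‖t‖ ^ n * C := by
          gcongr
          · exact norm_mul_pow_le t hq.le j
          · exact hC n
      _ = ‖t‖ ^ n * C * ‖tetTerm u m e j‖ := by ring
  · exact mul_nonneg (pow_nonneg (norm_nonneg t) n) ((norm_nonneg _).trans (hC 0))

lemma summable_norm_tetIndex_series (hu0 : 0 < ‖u‖) (hu1 : ‖u‖ < 1) (ht : ‖t‖ < 1)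
    (m e : ℤ) :
    Summable fun n : ℕ =>
      ‖tetIndex u (m - n) e * (t * u ^ (-e)) ^ n / qPoch (u ^ 2) (u ^ 2) n‖ := by
  have hB := summable_norm_tetTerm_mul_pow_div hu0 hu1 ht m e
  refine .of_nonneg_of_le (fun n => norm_nonneg _) (fun n => ?_) hB.prod
  rw [tetIndex_sub_mul_pow_div_eq_tsum (norm_pos_iff.mp hu0)]
  exact norm_tsum_le_tsum_norm (hB.prod_factor n)

theorem qPochInf_mul_tsum_tetIndex_series (hu0 : 0 < ‖u‖) (hu1 : ‖u‖ < 1) (ht : ‖t‖ < 1)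
    (m e : ℤ) :
    qPochInf t (u ^ 2) *
        ∑' n : ℕ, tetIndex u (m - n) e * (t * u ^ (-e)) ^ n / qPoch (u ^ 2) (u ^ 2) n =
      ∑' j : ℕ, tetTerm u m e j * qPoch t (u ^ 2) j := by
  have hq := norm_sq_lt_one hu1
  have hB := (summable_norm_tetTerm_mul_pow_div hu0 hu1 ht m e).of_norm
  simp only [tetIndex_sub_mul_pow_div_eq_tsum (norm_pos_iff.mp hu0)]
  rw [← Summable.tsum_comm (f := fun n j =>
    tetTerm u m e j * (t * (u ^ 2) ^ j) ^ n / qPoch (u ^ 2) (u ^ 2) n) hB, ← tsum_mul_left]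
  refine tsum_congr fun j => ?_
  simp only [mul_div_assoc]
  rw [tsum_mul_left, ← qPochInf_mul_qExp_mul_pow hq ht j, qExp]
  ring

lemma natCast_mul_pred_div_two_mul_two (j : ℕ) :
    ((j * (j - 1) / 2 : ℕ) : ℤ) * 2 = j * ((j : ℤ) - 1) := by
  rcases j with _ | k
  · simp
  · have h := Nat.div_mul_cancel (Nat.even_mul_pred_self (k + 1)).two_dvd
    rw [Nat.add_sub_cancel] at h ⊢
    rw [Nat.cast_succ, add_sub_cancel_right]
    exact_mod_cast h

lemma tetTerm_natCast_eq (hu : u ≠ 0) (m : ℤ) (e j : ℕ) :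
    tetTerm u m e j = u ^ (-(m * e)) / qPoch (u ^ 2) (u ^ 2) e *
      ((-1 : ℂ) ^ j * (u ^ 2) ^ (((j * (j - 1) / 2 : ℕ) : ℤ) + (1 - m) * j) /
        (qPoch ((u ^ 2) ^ (e + 1)) (u ^ 2) j * qPoch (u ^ 2) (u ^ 2) j)) := by
  have hexp : u ^ ((j : ℤ) * (j + 1) - (2 * j + e) * m) =
      u ^ (-(m * e)) * (u ^ 2) ^ (((j * (j - 1) / 2 : ℕ) : ℤ) + (1 - m) * j) := by
    rw [← zpow_natCast u 2, ← zpow_mul, ← zpow_add₀ hu, Nat.cast_ofNat]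
    congr 1
    linear_combination -natCast_mul_pred_div_two_mul_two j
  have hsplit : qPoch (u ^ 2) (u ^ 2) ((j : ℤ) + e).toNat =
      qPoch (u ^ 2) (u ^ 2) e * qPoch ((u ^ 2) ^ (e + 1)) (u ^ 2) j := by
    rw [show ((j : ℤ) + e).toNat = e + j by omega, qPoch_add, ← pow_succ' (u ^ 2) e]
  rw [tetTerm, if_pos (by simp), hexp, hsplit]
  ring

end Tetrahedral

/-- for `e ≥ 0` and `|t| < 1`,
`Σ_{n≥0} I_Δ(m-n,e) (t q^{-e/2})^n/(q;q)_n
  = q^{-me/2} ((q^{e+1};q)_∞/((q;q)_∞ (t;q)_∞)) ₁φ₁(t; q^{e+1}; q, q^{1-m})`,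
with absolute convergence; here `u = q^{1/2}`. -/
theorem stmt_12 (u : ℂ) (hu0 : 0 < ‖u‖) (hu1 : ‖u‖ < 1) (q : ℂ) (hq : q = u ^ 2)
    (m e : ℤ) (he : 0 ≤ e) (t : ℂ) (ht : ‖t‖ < 1) :
    Summable (fun n : ℕ =>
      ‖tetIndex u (m - n) e * (t * u ^ (-e)) ^ n / qPoch q q n‖) ∧
    ∑' n : ℕ, tetIndex u (m - n) e * (t * u ^ (-e)) ^ n / qPoch q q n =
      u ^ (-(m * e)) * (qPochInf (q ^ (e + 1)) q / (qPochInf q q * qPochInf t q)) *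
        ∑' k : ℕ, qPoch t q k / (qPoch (q ^ (e + 1)) q k * qPoch q q k) *
          ((-1 : ℂ) ^ k * q ^ (((k * (k - 1) / 2 : ℕ) : ℤ) + (1 - m) * k)) := by
  subst hq
  lift e to ℕ using he
  refine ⟨summable_norm_tetIndex_series hu0 hu1 ht m e, ?_⟩
  have hu : u ≠ 0 := norm_pos_iff.mp hu0
  have hq := norm_sq_lt_one hu1
  have hqe : (u ^ 2) ^ ((e : ℤ) + 1) = (u ^ 2) ^ (e + 1) := by norm_cast
  have hsplit := qPochInf_eq_qPoch_mul (u ^ 2) hq e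
  rw [← pow_succ'] at hsplit
  have hterm (j : ℕ) : tetTerm u m e j * qPoch t (u ^ 2) j =
      u ^ (-(m * e)) / qPoch (u ^ 2) (u ^ 2) e *
        (qPoch t (u ^ 2) j / (qPoch ((u ^ 2) ^ (e + 1)) (u ^ 2) j * qPoch (u ^ 2) (u ^ 2) j) *
          ((-1 : ℂ) ^ j * (u ^ 2) ^ (((j * (j - 1) / 2 : ℕ) : ℤ) + (1 - m) * j))) := by
    rw [tetTerm_natCast_eq hu]
    ring
  have htInf := qPochInf_ne_zero ht hq
  have hqeInf := qPochInf_ne_zero ((norm_mul_pow_le (u ^ 2) hq.le e).trans_lt hq) hq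
  rw [← pow_succ'] at hqeInf
  have hqe0 := qPoch_ne_zero hq hq.le e
  rw [← inv_mul_cancel_left₀ htInf (∑' n : ℕ, _),
    qPochInf_mul_tsum_tetIndex_series hu0 hu1 ht m e, tsum_congr hterm, tsum_mul_left, hqe, hsplit]
  field_simp
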